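/- Let P be a finite poset. Define two operators on the set of antichains of P: 𝔛(A) = the set of minimal elements of P ∖ ↓A, where ↓A is the lower set generated by A, and 𝔛′(A) = the set of maximal elements of P ∖ ↑A, where ↑A is the upper set generated by A. Then 𝔛 and 𝔛′ are mutually inverse bijections on the set of antichains of P; that is, 𝔛′(𝔛(A)) = A and 𝔛(𝔛′(A)) = A for every antichain A of P. -/

import Mathlib

/-- The lower set generated by a subset `A` of a poset. -/
def lowerGen {P : Type*} [PartialOrder P] (A : Set P) : Set P :=
  {x | ∃ a ∈ A, x ≤ a}

/-- The upper set generated by a subset `A` of a poset. -/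
def upperGen {P : Type*} [PartialOrder P] (A : Set P) : Set P :=
  {x | ∃ a ∈ A, a ≤ x}

/-- The reverse operator `𝔛`: the set of minimal elements of the complement of
the lower set generated by `A`. -/
def Xop {P : Type*} [PartialOrder P] (A : Set P) : Set P :=
  {y | Minimal (fun z => z ∈ (lowerGen A)ᶜ) y}

/-- The reverse operator `𝔛′`: the set of maximal elements of the complement of
the upper set generated by `A`. -/
def Xop' {P : Type*} [PartialOrder P] (A : Set P) : Set P :=
  {y | Maximal (fun z => z ∈ (upperGen A)ᶜ) y}

/-! In a well-founded poset the minimal elements of `P ∖ ↓A` generate it as an upper set, so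
`𝔛′(𝔛(A))` is the set of maximal elements of `↓A`, which is `A` when `A` is an antichain.
The other identity is the same statement in the dual order, where `𝔛` and `𝔛′` trade places. -/

theorem upperClosure_setOf_minimal {α : Type*} [Preorder α] [WellFoundedLT α] {s : Set α}
    (hs : IsUpperSet s) : (upperClosure {x | Minimal (· ∈ s) x} : Set α) = s := by
  ext x
  simp only [SetLike.mem_coe, mem_upperClosure, Set.mem_ofPred_eq]
  constructor
  · rintro ⟨a, ha, hax⟩
    exact hs hax ha.prop
  · intro hx
    obtain ⟨b, hbx, hb⟩ := exists_minimal_le_of_wellFoundedLT (· ∈ s) x hx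
    exact ⟨b, hb, hbx⟩

section

variable {P : Type*} [PartialOrder P]

theorem lowerGen_eq_lowerClosure (A : Set P) : lowerGen A = lowerClosure A := rfl

theorem upperGen_eq_upperClosure (A : Set P) : upperGen A = upperClosure A := rfl

theorem upperGen_Xop [WellFoundedLT P] (A : Set P) : upperGen (Xop A) = (lowerGen A)ᶜ := by
  rw [lowerGen_eq_lowerClosure, upperGen_eq_upperClosure]
  exact upperClosure_setOf_minimal (lowerClosure A).lower.compl

theorem Xop'_Xop [WellFoundedLT P] {A : Set P} (hA : IsAntichain (· ≤ ·) A) :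
    Xop' (Xop A) = A := by
  ext x
  simp only [Xop', upperGen_Xop, compl_compl, lowerGen_eq_lowerClosure, SetLike.mem_coe]
  exact hA.maximal_mem_lowerClosure_iff_mem

theorem Xop_Xop' [WellFoundedGT P] {A : Set P} (hA : IsAntichain (· ≤ ·) A) :
    Xop (Xop' A) = A :=
  Xop'_Xop (P := Pᵒᵈ) hA.to_dual

end

theorem stmt0 {P : Type*} [Fintype P] [PartialOrder P] (A : Set P)
    (hA : IsAntichain (· ≤ ·) A) :
    Xop' (Xop A) = A ∧ Xop (Xop' A) = A :=
  ⟨Xop'_Xop hA, Xop_Xop' hA⟩
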